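/- arXiv:1210.0194 — 3 statements merged into one kernel-verified Lean document; each statement's English description precedes it below -/
import Mathlib

section
/- Let (A, A₊, u_A) be a polytopic theory that is not classical (i.e. Ω_A is a polytope but not a simplex). Then there exists a pure effect f ∈ E_A such that its certain face F_f is a minus-face of Ω_A and such that there is no transformation L : A → A with u_A ∘ L = f and L(ω) = ω for all ω ∈ F_f. -/
open Set

/-- The dimension of a subset `S` of a real vector space: `d` where `d+1` is the maximal
number of affinely independent points in `S` (so `dim ∅ = -1`). -/
noncomputable def setDim {V : Type*} [AddCommGroup V] [Module ℝ V] (S : Set V) : ℤ :=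
  ((sSup {n : ℕ | ∃ p : Fin n → V, (∀ i, p i ∈ S) ∧ AffineIndependent ℝ p} : ℕ) : ℤ) - 1

/-- A face of a convex set `C`: a nonempty convex subset `F ⊆ C` such that whenever
`x, y ∈ C`, `0 < λ < 1` and `λ•x + (1-λ)•y ∈ F`, then `x, y ∈ F`. -/
def IsFaceOf {V : Type*} [AddCommGroup V] [Module ℝ V] (F C : Set V) : Prop :=
  F.Nonempty ∧ Convex ℝ F ∧ F ⊆ C ∧
    ∀ x ∈ C, ∀ y ∈ C, ∀ l : ℝ, 0 < l → l < 1 → l • x + (1 - l) • y ∈ F → x ∈ F ∧ y ∈ F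

/-- A minus-face of a convex set `C` is a face of dimension `dim C - 1`. -/
def IsMinusFace {V : Type*} [AddCommGroup V] [Module ℝ V] (F C : Set V) : Prop :=
  IsFaceOf F C ∧ setDim F = setDim C - 1

/-- A polytope: the convex hull of finitely many points. -/
def IsPolytope {V : Type*} [AddCommGroup V] [Module ℝ V] (S : Set V) : Prop :=
  ∃ t : Finset V, S = convexHull ℝ (t : Set V)

/-- A simplex: the convex hull of finitely many affinely independent points. -/
def IsSimplex {V : Type*} [AddCommGroup V] [Module ℝ V] (S : Set V) : Prop :=
  ∃ t : Finset V, AffineIndependent ℝ ((↑) : ↥(t : Set V) → V) ∧ S = convexHull ℝ (t : Set V)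

/-- An abstract state space `(A, A₊, u)`: `A₊` is a closed generating cone in the
finite-dimensional real vector space `A`, and `u` is a linear functional which is strictly
positive on `A₊ \ {0}`. -/
structure IsAbstractStateSpace {A : Type*} [NormedAddCommGroup A] [NormedSpace ℝ A]
    [FiniteDimensional ℝ A] (Apos : Set A) (u : A →ₗ[ℝ] ℝ) : Prop where
  closed : IsClosed Apos
  add_mem : ∀ x ∈ Apos, ∀ y ∈ Apos, x + y ∈ Apos
  smul_mem : ∀ (a : ℝ), 0 ≤ a → ∀ x ∈ Apos, a • x ∈ Apos
  pointed : ∀ x, x ∈ Apos → -x ∈ Apos → x = 0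
  generating : ∀ x : A, ∃ y ∈ Apos, ∃ z ∈ Apos, x = y - z
  unit_pos : ∀ x ∈ Apos, x ≠ 0 → 0 < u x

/-- The set of normalized states `Ω_A`. -/
def States {A : Type*} [NormedAddCommGroup A] [NormedSpace ℝ A]
    (Apos : Set A) (u : A →ₗ[ℝ] ℝ) : Set A :=
  {ω ∈ Apos | u ω = 1}

/-- The set of effects `E_A`: linear functionals taking values in `[0,1]` on all states. -/
def Effects {A : Type*} [NormedAddCommGroup A] [NormedSpace ℝ A]
    (Apos : Set A) (u : A →ₗ[ℝ] ℝ) : Set (Module.Dual ℝ A) :=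
  {f | ∀ ω ∈ States Apos u, 0 ≤ f ω ∧ f ω ≤ 1}

/-- A pure effect is an extreme point of the convex set of effects. -/
def IsPureEffect {A : Type*} [NormedAddCommGroup A] [NormedSpace ℝ A]
    (Apos : Set A) (u : A →ₗ[ℝ] ℝ) (f : Module.Dual ℝ A) : Prop :=
  f ∈ Set.extremePoints ℝ (Effects Apos u)

/-- The certain face `F_f = {ω ∈ Ω_A | f(ω) = 1}` of an effect `f`. -/
def certainFace {A : Type*} [NormedAddCommGroup A] [NormedSpace ℝ A]
    (Apos : Set A) (u : A →ₗ[ℝ] ℝ) (f : Module.Dual ℝ A) : Set A :=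
  {ω ∈ States Apos u | f ω = 1}

/-- The impossible face `F̄_f = {ω ∈ Ω_A | f(ω) = 0}` of an effect `f`. -/
def impossibleFace {A : Type*} [NormedAddCommGroup A] [NormedSpace ℝ A]
    (Apos : Set A) (u : A →ₗ[ℝ] ℝ) (f : Module.Dual ℝ A) : Set A :=
  {ω ∈ States Apos u | f ω = 0}

/-- A transformation: a positive linear map such that `u(T ω) ≤ 1` for all states `ω`. -/
def IsTransformation {A : Type*} [NormedAddCommGroup A] [NormedSpace ℝ A]
    (Apos : Set A) (u : A →ₗ[ℝ] ℝ) (T : A →ₗ[ℝ] A) : Prop :=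
  (∀ x ∈ Apos, T x ∈ Apos) ∧ ∀ ω ∈ States Apos u, u (T ω) ≤ 1

variable {A : Type*} [NormedAddCommGroup A] [NormedSpace ℝ A] [FiniteDimensional ℝ A]

set_option linter.unusedSectionVars false
open Module
set_option linter.unusedVariables false
set_option maxHeartbeats 2000000

lemma setDim_eq (S : Set A) (hS : S.Nonempty) :
    setDim S = (finrank ℝ (vectorSpan ℝ S) : ℤ) := by
  set k := finrank ℝ (vectorSpan ℝ S) with hk
  have hbdd : ∀ n ∈ {n : ℕ | ∃ p : Fin n → A, (∀ i, p i ∈ S) ∧ AffineIndependent ℝ p},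
      n ≤ k + 1 := by
    rintro n ⟨p, hpS, hpi⟩
    rcases n with _ | m
    · omega
    · have hcard : Fintype.card (Fin (m + 1)) = m + 1 := by simp
      have h1 : finrank ℝ (vectorSpan ℝ (Set.range p)) = m :=
        hpi.finrank_vectorSpan hcard
      have h2 : vectorSpan ℝ (Set.range p) ≤ vectorSpan ℝ S :=
        vectorSpan_mono ℝ (by rintro x ⟨i, rfl⟩; exact hpS i)
      have := Submodule.finrank_mono h2
      omega
  have hmem : k + 1 ∈ {n : ℕ | ∃ p : Fin n → A, (∀ i, p i ∈ S) ∧ AffineIndependent ℝ p} := by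
    obtain ⟨t, hts, hspan, hind⟩ := exists_affineIndependent ℝ A S
    have htfin : t.Finite := finite_set_of_fin_dim_affineIndependent ℝ hind
    haveI : Fintype t := htfin.fintype
    have htne : t.Nonempty := by
      rw [← affineSpan_nonempty ℝ, hspan, affineSpan_nonempty]; exact hS
    haveI : Nonempty t := htne.to_subtype
    have hvs : vectorSpan ℝ (Set.range ((↑) : t → A)) = vectorSpan ℝ S := by
      rw [Subtype.range_coe, ← direction_affineSpan, hspan, direction_affineSpan]
    have h2 := hind.finrank_vectorSpan_add_one
    rw [hvs] at h2
    let e := (Fintype.equivFinOfCardEq h2.symm).symm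
    refine ⟨fun i => (e i : A), fun i => hts (e i).2, ?_⟩
    exact hind.comp_embedding e.toEmbedding
  have hsup : sSup {n : ℕ | ∃ p : Fin n → A, (∀ i, p i ∈ S) ∧ AffineIndependent ℝ p} = k + 1 := by
    apply le_antisymm
    · exact csSup_le ⟨k + 1, hmem⟩ hbdd
    · exact le_csSup ⟨k + 1, hbdd⟩ hmem
  rw [setDim, hsup]; push_cast; ring

lemma span_eq_vectorSpan_sup {u : A →ₗ[ℝ] ℝ} {S : Set A} {p : A} (hp : p ∈ S)
    (hu : ∀ x ∈ S, u x = 1) :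
    Submodule.span ℝ S = vectorSpan ℝ S ⊔ (Submodule.span ℝ {p}) := by
  apply le_antisymm
  · rw [Submodule.span_le]
    intro x hx
    have : x = (x - p) + p := by abel
    rw [this]
    exact Submodule.add_mem _
      (Submodule.mem_sup_left (vsub_mem_vectorSpan ℝ hx hp))
      (Submodule.mem_sup_right (Submodule.mem_span_singleton_self p))
  · apply sup_le
    · rw [vectorSpan_def, Submodule.span_le]
      rintro z hz
      rw [Set.mem_vsub] at hz
      obtain ⟨x, hx, y, hy, rfl⟩ := hz
      exact Submodule.sub_mem _ (Submodule.subset_span hx) (Submodule.subset_span hy)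
    · rw [Submodule.span_le, Set.singleton_subset_iff]
      exact Submodule.subset_span hp

lemma vectorSpan_le_ker {u : A →ₗ[ℝ] ℝ} {S : Set A} (hu : ∀ x ∈ S, u x = 1) :
    vectorSpan ℝ S ≤ LinearMap.ker u := by
  rw [vectorSpan_def, Submodule.span_le]
  rintro z hz
  rw [Set.mem_vsub] at hz
  obtain ⟨x, hx, y, hy, rfl⟩ := hz
  simp [LinearMap.mem_ker, map_sub, hu x hx, hu y hy]

lemma finrank_span_hyperplane {u : A →ₗ[ℝ] ℝ} {S : Set A} {p : A} (hp : p ∈ S)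
    (hu : ∀ x ∈ S, u x = 1) :
    finrank ℝ (Submodule.span ℝ S) = finrank ℝ (vectorSpan ℝ S) + 1 := by
  rw [span_eq_vectorSpan_sup hp hu]
  have hinf : vectorSpan ℝ S ⊓ Submodule.span ℝ {p} = ⊥ := by
    rw [eq_bot_iff]
    intro x hx
    obtain ⟨hx1, hx2⟩ := Submodule.mem_inf.mp hx
    rw [Submodule.mem_span_singleton] at hx2
    obtain ⟨c, rfl⟩ := hx2
    have := vectorSpan_le_ker hu hx1
    rw [LinearMap.mem_ker, map_smul, hu p hp, smul_eq_mul, mul_one] at this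
    simp [this]
  have hpne : p ≠ 0 := by
    intro h; have := hu p hp; rw [h, map_zero] at this; norm_num at this
  have := Submodule.finrank_sup_add_finrank_inf_eq (vectorSpan ℝ S) (Submodule.span ℝ {p})
  rw [hinf, finrank_bot, finrank_span_singleton hpne] at this
  omega

lemma vectorSpan_le_ker_of_zero {ψ : A →ₗ[ℝ] ℝ} {S : Set A} (hψ : ∀ x ∈ S, ψ x = 0) :
    vectorSpan ℝ S ≤ LinearMap.ker ψ := by
  rw [vectorSpan_def, Submodule.span_le]
  rintro z hz
  rw [Set.mem_vsub] at hz
  obtain ⟨x, hx, y, hy, rfl⟩ := hz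
  simp [LinearMap.mem_ker, map_sub, hψ x hx, hψ y hy]

lemma grow {u : A →ₗ[ℝ] ℝ} {E : Set A} (hEfin : E.Finite) {Ω : Set A}
    (hΩE : Ω = convexHull ℝ E) (hu1 : ∀ x ∈ Ω, u x = 1)
    (hspanE : Submodule.span ℝ E = ⊤) {w : A} (hw : w ∈ E)
    (φ : A →ₗ[ℝ] ℝ) (c : ℝ) (hle : ∀ x ∈ Ω, φ x ≤ c) (hwlt : φ w < c)
    (hFne : {x ∈ Ω | φ x = c}.Nonempty)
    (hdim : finrank ℝ (vectorSpan ℝ {x ∈ Ω | φ x = c}) + 2 < finrank ℝ A) :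
    ∃ (φ' : A →ₗ[ℝ] ℝ) (c' : ℝ), (∀ x ∈ Ω, φ' x ≤ c') ∧ φ' w < c' ∧
      {x ∈ Ω | φ' x = c'}.Nonempty ∧
      finrank ℝ (vectorSpan ℝ {x ∈ Ω | φ x = c}) <
        finrank ℝ (vectorSpan ℝ {x ∈ Ω | φ' x = c'}) := by
  classical
  set F := {x ∈ Ω | φ x = c} with hF
  have hEΩ : E ⊆ Ω := hΩE ▸ subset_convexHull ℝ E
  have hFΩ : F ⊆ Ω := fun x hx => hx.1
  -- the key step, for a functional with a positive value somewhere on E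
  have key : ∀ ψ : A →ₗ[ℝ] ℝ, (∀ x ∈ F, ψ x = 0) → ψ w = 0 → (∃ v ∈ E, 0 < ψ v) →
      ∃ (φ' : A →ₗ[ℝ] ℝ) (c' : ℝ), (∀ x ∈ Ω, φ' x ≤ c') ∧ φ' w < c' ∧
      {x ∈ Ω | φ' x = c'}.Nonempty ∧
      finrank ℝ (vectorSpan ℝ F) < finrank ℝ (vectorSpan ℝ {x ∈ Ω | φ' x = c'}) := by
    rintro ψ hψF hψw ⟨v₁, hv₁E, hv₁pos⟩
    set T : Finset A := hEfin.toFinset.filter (fun v => 0 < ψ v) with hT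
    have hTne : T.Nonempty := ⟨v₁, by simp [hT, hEfin.mem_toFinset, hv₁E, hv₁pos]⟩
    have hTE : ∀ v ∈ T, v ∈ E ∧ 0 < ψ v := by
      intro v hv; rw [hT, Finset.mem_filter, hEfin.mem_toFinset] at hv; exact hv
    have hTlt : ∀ v ∈ T, φ v < c := by
      intro v hv
      obtain ⟨hvE, hvpos⟩ := hTE v hv
      rcases lt_or_eq_of_le (hle v (hEΩ hvE)) with h | h
      · exact h
      · exact absurd (hψF v ⟨hEΩ hvE, h⟩) (ne_of_gt hvpos)
    set ts : ℝ := T.inf' hTne (fun v => (c - φ v) / ψ v) with hts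
    obtain ⟨vs, hvsT, hvseq⟩ := Finset.exists_mem_eq_inf' hTne (fun v => (c - φ v) / ψ v)
    have htspos : 0 < ts := by
      rw [hts, Finset.lt_inf'_iff]
      intro v hv
      exact div_pos (by linarith [hTlt v hv]) (hTE v hv).2
    set φ' : A →ₗ[ℝ] ℝ := φ + ts • ψ with hφ'
    have hφ'app : ∀ x, φ' x = φ x + ts * ψ x := fun x => rfl
    have hleE : ∀ v ∈ E, φ' v ≤ c := by
      intro v hvE
      rcases le_or_gt (ψ v) 0 with h | h
      · have : ts * ψ v ≤ 0 := mul_nonpos_of_nonneg_of_nonpos htspos.le h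
        rw [hφ'app]; linarith [hle v (hEΩ hvE)]
      · have hvT : v ∈ T := by rw [hT, Finset.mem_filter, hEfin.mem_toFinset]; exact ⟨hvE, h⟩
        have := Finset.inf'_le (fun v => (c - φ v) / ψ v) hvT
        rw [← hts] at this
        rw [hφ'app]
        have := (le_div_iff₀ h).mp this
        linarith
    have hle' : ∀ x ∈ Ω, φ' x ≤ c := by
      intro x hx
      rw [hΩE] at hx
      have hcvx : Convex ℝ {y : A | φ' y ≤ c} := by
        intro a ha b hb s t hs ht hst
        simp only [mem_setOf_eq, map_add, map_smul, smul_eq_mul] at *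
        have h1 : s * φ' a ≤ s * c := mul_le_mul_of_nonneg_left ha hs
        have h2 : t * φ' b ≤ t * c := mul_le_mul_of_nonneg_left hb ht
        have h3 : s * c + t * c = c := by rw [← add_mul, hst, one_mul]
        linarith
      exact convexHull_min hleE hcvx hx
    have hwlt' : φ' w < c := by rw [hφ'app, hψw]; linarith
    have hvs_mem : vs ∈ {x ∈ Ω | φ' x = c} := by
      obtain ⟨hvsE, hvspos⟩ := hTE vs hvsT
      refine ⟨hEΩ hvsE, ?_⟩
      have htseq : ts = (c - φ vs) / ψ vs := by rw [hts, hvseq]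
      rw [hφ'app, htseq]
      field_simp
      ring
    have hFsub : F ⊆ {x ∈ Ω | φ' x = c} := by
      rintro x ⟨hxΩ, hxφ⟩
      exact ⟨hxΩ, by rw [hφ'app, hψF x ⟨hxΩ, hxφ⟩, mul_zero, add_zero, hxφ]⟩
    obtain ⟨f₁, hf₁⟩ := hFne
    have hstrict : vectorSpan ℝ F < vectorSpan ℝ {x ∈ Ω | φ' x = c} := by
      refine lt_of_le_of_ne (vectorSpan_mono ℝ hFsub) ?_
      intro heq
      have hmem : vs - f₁ ∈ vectorSpan ℝ F := by
        rw [heq]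
        exact vsub_mem_vectorSpan ℝ hvs_mem (hFsub hf₁)
      have := vectorSpan_le_ker_of_zero hψF hmem
      rw [LinearMap.mem_ker, map_sub, hψF f₁ hf₁, sub_zero] at this
      exact absurd this (ne_of_gt (hTE vs hvsT).2)
    exact ⟨φ', c, hle', hwlt', ⟨vs, hvs_mem⟩, Submodule.finrank_lt_finrank_of_lt hstrict⟩
  -- construct ψ
  obtain ⟨f₁, hf₁⟩ := hFne
  have hWlt : Submodule.span ℝ F ⊔ (Submodule.span ℝ {w}) < ⊤ := by
    rw [lt_top_iff_ne_top]
    intro htop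
    have h1 : finrank ℝ (Submodule.span ℝ F) = finrank ℝ (vectorSpan ℝ F) + 1 :=
      finrank_span_hyperplane hf₁ (fun x hx => hu1 x (hFΩ hx))
    have h2 : finrank ℝ (Submodule.span ℝ ({w} : Set A)) ≤ 1 :=
      finrank_span_le_card _ |>.trans (by simp)
    have h3 := Submodule.finrank_sup_add_finrank_inf_eq (Submodule.span ℝ F)
      (Submodule.span ℝ ({w} : Set A))
    rw [htop, finrank_top] at h3
    omega
  obtain ⟨ψ, hψne, hψmap⟩ := Submodule.exists_dual_map_eq_bot_of_lt_top hWlt inferInstance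
  have hψzero : ∀ x ∈ Submodule.span ℝ F ⊔ Submodule.span ℝ ({w} : Set A), ψ x = 0 := by
    intro x hx
    have : ψ x ∈ Submodule.map ψ (Submodule.span ℝ F ⊔ Submodule.span ℝ ({w} : Set A)) :=
      Submodule.mem_map_of_mem hx
    rw [hψmap] at this
    simpa using this
  have hψF : ∀ x ∈ F, ψ x = 0 := fun x hx =>
    hψzero x (Submodule.mem_sup_left (Submodule.subset_span hx))
  have hψw : ψ w = 0 :=
    hψzero w (Submodule.mem_sup_right (Submodule.subset_span rfl))
  have hψE : ∃ v ∈ E, ψ v ≠ 0 := by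
    by_contra h
    push_neg at h
    apply hψne
    ext x
    simp only [LinearMap.zero_apply]
    have hxtop : x ∈ Submodule.span ℝ E := hspanE ▸ Submodule.mem_top
    refine Submodule.span_induction (fun y hy => h y hy) (map_zero ψ) ?_ ?_ hxtop
    · intro a b _ _ ha hb; rw [map_add, ha, hb, add_zero]
    · intro r a _ ha; rw [map_smul, ha, smul_zero]
  obtain ⟨v₁, hv₁E, hv₁⟩ := hψE
  rcases hv₁.lt_or_gt with h | h
  · exact key (-ψ) (fun x hx => by simp [hψF x hx]) (by simp [hψw])
      ⟨v₁, hv₁E, by simpa using h⟩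
  · exact key ψ hψF hψw ⟨v₁, hv₁E, h⟩

/-- In a non-classical polytopic theory there is a pure effect `f` whose
certain face is a minus-face of `Ω_A` and which admits no transformation `L` with
`u ∘ L = f` fixing `F_f` pointwise. -/
theorem exists_pureEffect_no_transformation
    (Apos : Set A) (u : A →ₗ[ℝ] ℝ) (hASS : IsAbstractStateSpace Apos u)
    (hpoly : IsPolytope (States Apos u)) (hnc : ¬ IsSimplex (States Apos u)) :
    ∃ f : Module.Dual ℝ A, IsPureEffect Apos u f ∧
      IsMinusFace (certainFace Apos u f) (States Apos u) ∧
      ¬ ∃ L : A →ₗ[ℝ] A, IsTransformation Apos u L ∧ (∀ x : A, u (L x) = f x) ∧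
        ∀ ω ∈ certainFace Apos u f, L ω = ω := by
  classical
  set Ω := States Apos u with hΩdef
  obtain ⟨t, ht⟩ := hpoly
  have hΩne : Ω.Nonempty := by
    rcases Set.eq_empty_or_nonempty Ω with h | h
    · exfalso; apply hnc
      refine ⟨∅, ?_, ?_⟩
      · haveI : Subsingleton (↥(((∅ : Finset A) : Set A))) :=
          ⟨fun a => absurd a.2 (by simp)⟩
        exact affineIndependent_of_subsingleton ℝ _
      · simp only [Finset.coe_empty, convexHull_empty]; exact h
    · exact h
  have hΩconv : Convex ℝ Ω := ht ▸ convex_convexHull ℝ _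
  have hΩcomp : IsCompact Ω := ht ▸ t.finite_toSet.isCompact_convexHull ℝ
  set E := Ω.extremePoints ℝ with hEdef
  have hEΩ : E ⊆ Ω := extremePoints_subset
  have hEfin : E.Finite := t.finite_toSet.subset (by
    rw [hEdef, ht]; exact extremePoints_convexHull_subset)
  have hΩE : Ω = convexHull ℝ E := by
    have h1 : closure (convexHull ℝ E) = Ω := closure_convexHull_extremePoints hΩcomp hΩconv
    rw [← h1, IsClosed.closure_eq (hEfin.isClosed_convexHull ℝ)]
  have hu1 : ∀ x ∈ Ω, u x = 1 := fun x hx => hx.2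
  have hEne : E.Nonempty := by
    by_contra h
    rw [Set.not_nonempty_iff_eq_empty] at h
    rw [h, convexHull_empty] at hΩE
    exact hΩne.ne_empty hΩE
  have hApos_sub : ∀ x ∈ Apos, x ∈ Submodule.span ℝ Ω := by
    intro x hx
    rcases eq_or_ne x 0 with rfl | hx0
    · exact Submodule.zero_mem _
    · have hux : 0 < u x := hASS.unit_pos x hx hx0
      have hmem : (u x)⁻¹ • x ∈ Ω := ⟨hASS.smul_mem _ (by positivity) x hx, by
        rw [map_smul, smul_eq_mul, inv_mul_cancel₀ (ne_of_gt hux)]⟩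
      have hxx : x = (u x) • ((u x)⁻¹ • x) := by
        rw [smul_smul, mul_inv_cancel₀ (ne_of_gt hux), one_smul]
      rw [hxx]
      exact Submodule.smul_mem _ _ (Submodule.subset_span hmem)
  have hspanΩ : Submodule.span ℝ Ω = ⊤ := by
    rw [eq_top_iff]
    intro x _
    obtain ⟨y, hy, z, hz, rfl⟩ := hASS.generating x
    exact Submodule.sub_mem _ (hApos_sub y hy) (hApos_sub z hz)
  have hspanE : Submodule.span ℝ E = ⊤ := by
    rw [eq_top_iff, ← hspanΩ, Submodule.span_le, hΩE]
    exact convexHull_min Submodule.subset_span (Submodule.span ℝ E).convex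
  obtain ⟨ω₀, hω₀⟩ := hΩne
  set n := finrank ℝ A with hn
  set d := finrank ℝ (vectorSpan ℝ Ω) with hd
  have hdn : d + 1 = n := by
    have := finrank_span_hyperplane (u := u) hω₀ hu1
    rw [hspanΩ, finrank_top] at this
    omega
  have hEind : ¬ AffineIndependent ℝ ((↑) : E → A) := by
    intro hind
    apply hnc
    refine ⟨hEfin.toFinset, ?_, ?_⟩
    · rw [show ((hEfin.toFinset : Finset A) : Set A) = E from hEfin.coe_toFinset]
      exact hind
    · rw [hEfin.coe_toFinset]; exact hΩE
  obtain ⟨B, hBE, hBspan, hBind⟩ := exists_affineIndependent ℝ A E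
  have hBne2 : B ≠ E := fun h => hEind (h ▸ hBind)
  obtain ⟨w, hwE, hwB⟩ := exists_of_ssubset (hBE.ssubset_of_ne hBne2)
  have hwΩ : w ∈ Ω := hEΩ hwE
  have hBΩ : B ⊆ Ω := hBE.trans hEΩ
  have huE : ∀ x ∈ E, u x = 1 := fun x hx => hu1 x (hEΩ hx)
  -- upper bound for faces avoiding w
  have hub : ∀ (φ : A →ₗ[ℝ] ℝ) (c : ℝ), (∀ x ∈ Ω, φ x ≤ c) → φ w < c →
      {x ∈ Ω | φ x = c}.Nonempty →
      finrank ℝ (vectorSpan ℝ {x ∈ Ω | φ x = c}) + 1 ≤ d := by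
    intro φ c hle hwlt hFne
    obtain ⟨f₁, hf₁⟩ := hFne
    set ψ₀ : A →ₗ[ℝ] ℝ := c • u - φ with hψ₀
    have hψ₀F : ∀ x ∈ {x ∈ Ω | φ x = c}, ψ₀ x = 0 := by
      rintro x ⟨hxΩ, hxφ⟩
      simp [hψ₀, LinearMap.sub_apply, LinearMap.smul_apply, hu1 x hxΩ, hxφ, smul_eq_mul]
    have hψ₀w : ψ₀ w ≠ 0 := by
      simp only [hψ₀, LinearMap.sub_apply, LinearMap.smul_apply, hu1 w hwΩ, smul_eq_mul,
        mul_one]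
      intro hcon
      have : φ w = c := by linarith
      linarith
    have hstrict : vectorSpan ℝ {x ∈ Ω | φ x = c} < vectorSpan ℝ Ω := by
      refine lt_of_le_of_ne (vectorSpan_mono ℝ (fun x hx => hx.1)) ?_
      intro heq
      have hmem : w - f₁ ∈ vectorSpan ℝ {x ∈ Ω | φ x = c} := by
        rw [heq]; exact vsub_mem_vectorSpan ℝ hwΩ hf₁.1
      have := vectorSpan_le_ker_of_zero hψ₀F hmem
      rw [LinearMap.mem_ker, map_sub, hψ₀F f₁ hf₁, sub_zero] at this
      exact hψ₀w this
    have := Submodule.finrank_lt_finrank_of_lt hstrict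
    omega
  -- base face: a vertex distinct from w
  have hBneE : B.Nonempty := by
    rw [← affineSpan_nonempty (k := ℝ), hBspan, affineSpan_nonempty]; exact hEne
  obtain ⟨v, hvB⟩ := hBneE
  have hvE : v ∈ E := hBE hvB
  have hvw : v ≠ w := fun h => hwB (h ▸ hvB)
  have hEvne : (E \ {v}).Nonempty := ⟨w, hwE, by simp [Ne.symm hvw]⟩
  have hEvfin : (E \ {v}).Finite := hEfin.subset diff_subset
  have hvnot : v ∉ convexHull ℝ (E \ {v}) := by
    intro hmem
    have hsub2 : convexHull ℝ (E \ {v}) ⊆ Ω := by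
      rw [hΩE]; exact convexHull_mono diff_subset
    have h3 : v ∈ (convexHull ℝ (E \ {v})).extremePoints ℝ :=
      inter_extremePoints_subset_extremePoints_of_subset hsub2 ⟨hmem, hvE⟩
    have h4 := extremePoints_convexHull_subset h3
    simp at h4
  obtain ⟨f₀, u₀, hsep, hu₀⟩ := geometric_hahn_banach_closed_point
    (convex_convexHull ℝ _) (hEvfin.isClosed_convexHull ℝ) hvnot
  set φ₀ : A →ₗ[ℝ] ℝ := f₀.toLinearMap with hφ₀
  set c₀ : ℝ := φ₀ v with hc₀
  have hcf₀ : c₀ = f₀ v := rfl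
  have hEeq : E = insert v (E \ {v}) := by
    rw [Set.insert_diff_singleton, Set.insert_eq_self.mpr hvE]
  have hface₀ : ∀ x ∈ Ω, φ₀ x ≤ c₀ ∧ (φ₀ x = c₀ → x = v) := by
    intro x hx
    rw [hΩE, hEeq, convexHull_insert hEvne, mem_convexJoin] at hx
    obtain ⟨a, ha, b, hb, hxseg⟩ := hx
    rw [mem_singleton_iff] at ha
    subst ha
    obtain ⟨s1, s2, hs1, hs2, hsum, rfl⟩ := hxseg
    have hfb : f₀ b < u₀ := hsep b hb
    have happ : φ₀ (s1 • a + s2 • b) = s1 * c₀ + s2 * (f₀ b) := by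
      simp [hφ₀, map_add, map_smul, smul_eq_mul, hc₀]
    constructor
    · rw [happ]
      have h1 : s2 * f₀ b ≤ s2 * c₀ := mul_le_mul_of_nonneg_left (by linarith) hs2
      have h2 : s1 * c₀ + s2 * c₀ = c₀ := by rw [← add_mul, hsum, one_mul]
      linarith
    · intro heq
      rw [happ] at heq
      have h2 : s1 * c₀ + s2 * c₀ = c₀ := by rw [← add_mul, hsum, one_mul]
      have hs2eq : s2 * (c₀ - f₀ b) = 0 := by linarith
      have hs20 : s2 = 0 := by
        rcases mul_eq_zero.mp hs2eq with h | h
        · exact h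
        · exfalso; linarith
      have hs11 : s1 = 1 := by linarith
      rw [hs20, hs11, one_smul, zero_smul, add_zero]
  have hle₀ : ∀ x ∈ Ω, φ₀ x ≤ c₀ := fun x hx => (hface₀ x hx).1
  have hwlt₀ : φ₀ w < c₀ := by
    have : f₀ w < u₀ := hsep w (subset_convexHull ℝ _ ⟨hwE, by simp [Ne.symm hvw]⟩)
    calc φ₀ w = f₀ w := rfl
    _ < u₀ := this
    _ < c₀ := hu₀
  have hFne₀ : {x ∈ Ω | φ₀ x = c₀}.Nonempty := ⟨v, hEΩ hvE, rfl⟩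
  have hrank₀ : finrank ℝ (vectorSpan ℝ {x ∈ Ω | φ₀ x = c₀}) = 0 := by
    have hsub : {x ∈ Ω | φ₀ x = c₀} ⊆ {v} := by
      rintro x ⟨hxΩ, hxφ⟩
      exact (hface₀ x hxΩ).2 hxφ
    have := vectorSpan_mono ℝ (V := A) hsub
    rw [vectorSpan_singleton, le_bot_iff] at this
    rw [this, finrank_bot]
  -- main recursion
  have main : ∀ m : ℕ, ∀ φ : A →ₗ[ℝ] ℝ, ∀ c : ℝ, (∀ x ∈ Ω, φ x ≤ c) → φ w < c →
      {x ∈ Ω | φ x = c}.Nonempty →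
      d ≤ finrank ℝ (vectorSpan ℝ {x ∈ Ω | φ x = c}) + 1 + m →
      ∃ (φ' : A →ₗ[ℝ] ℝ) (c' : ℝ), (∀ x ∈ Ω, φ' x ≤ c') ∧ φ' w < c' ∧
        {x ∈ Ω | φ' x = c'}.Nonempty ∧
        finrank ℝ (vectorSpan ℝ {x ∈ Ω | φ' x = c'}) + 1 = d := by
    intro m
    induction m with
    | zero =>
      intro φ c hle hwlt hFne hm
      exact ⟨φ, c, hle, hwlt, hFne, le_antisymm (hub φ c hle hwlt hFne) (by omega)⟩
    | succ m ih =>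
      intro φ c hle hwlt hFne hm
      rcases le_or_gt d (finrank ℝ (vectorSpan ℝ {x ∈ Ω | φ x = c}) + 1) with h | h
      · exact ⟨φ, c, hle, hwlt, hFne, le_antisymm (hub φ c hle hwlt hFne) h⟩
      · have hdim2 : finrank ℝ (vectorSpan ℝ {x ∈ Ω | φ x = c}) + 2 < n := by omega
        obtain ⟨φ', c', hle', hwlt', hFne', hgt⟩ :=
          grow hEfin hΩE hu1 hspanE hwE φ c hle hwlt hFne hdim2
        exact ih φ' c' hle' hwlt' hFne' (by omega)
  obtain ⟨φ, c, hle, hwlt, hFne, hFrank⟩ :=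
    main d φ₀ c₀ hle₀ hwlt₀ hFne₀ (by omega)
  set F := {x ∈ Ω | φ x = c} with hFdef
  have hFΩ : F ⊆ Ω := fun x hx => hx.1
  -- minimum of φ over Ω
  have hEfsne : hEfin.toFinset.Nonempty := by
    rwa [Set.Finite.toFinset_nonempty]
  obtain ⟨x₀, hx₀T, hx₀min⟩ := Finset.exists_min_image hEfin.toFinset φ hEfsne
  have hx₀E : x₀ ∈ E := hEfin.mem_toFinset.mp hx₀T
  have hx₀Ω : x₀ ∈ Ω := hEΩ hx₀E
  set m0 : ℝ := φ x₀ with hm0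
  have hmΩ : ∀ x ∈ Ω, m0 ≤ φ x := by
    intro x hx
    rw [hΩE] at hx
    refine convexHull_min (fun y hy => hx₀min y (hEfin.mem_toFinset.mpr hy)) ?_ hx
    exact convex_halfSpace_ge (IsLinearMap.mk φ.map_add φ.map_smul) m0
  have hmc : m0 < c := lt_of_le_of_lt (hx₀min w (hEfin.mem_toFinset.mpr hwE)) hwlt
  set δ : ℝ := c - m0 with hδdef
  have hδ : 0 < δ := by rw [hδdef]; linarith
  set f : A →ₗ[ℝ] ℝ := δ⁻¹ • (φ - m0 • u) with hfdef
  have hfapp : ∀ x, f x = (φ x - m0 * u x) / δ := by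
    intro x
    simp [hfdef, LinearMap.smul_apply, LinearMap.sub_apply, smul_eq_mul, div_eq_inv_mul]
  have hfΩ : ∀ x ∈ Ω, f x = (φ x - m0) / δ := by
    intro x hx; rw [hfapp, hu1 x hx, mul_one]
  have hf0 : ∀ x ∈ Ω, 0 ≤ f x := by
    intro x hx
    rw [hfΩ x hx]
    exact div_nonneg (by linarith [hmΩ x hx]) hδ.le
  have hf1 : ∀ x ∈ Ω, f x ≤ 1 := by
    intro x hx
    rw [hfΩ x hx, div_le_one hδ]
    have := hle x hx
    rw [hδdef]; linarith
  have hfeq1 : ∀ x ∈ Ω, (f x = 1 ↔ φ x = c) := by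
    intro x hx
    rw [hfΩ x hx, div_eq_one_iff_eq hδ.ne']
    constructor
    · intro h; rw [hδdef] at h; linarith
    · intro h; rw [h, hδdef]
  have hcf : certainFace Apos u f = F := by
    ext x
    constructor
    · rintro ⟨hxΩ, hx1⟩
      exact ⟨hxΩ, (hfeq1 x hxΩ).mp hx1⟩
    · rintro ⟨hxΩ, hxc⟩
      exact ⟨hxΩ, (hfeq1 x hxΩ).mpr hxc⟩
  have hfE : f ∈ Effects Apos u := fun ω hω => ⟨hf0 ω hω, hf1 ω hω⟩
  have hfx₀ : f x₀ = 0 := by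
    rw [hfΩ x₀ hx₀Ω, hm0, sub_self, zero_div]
  have hFu1 : ∀ x ∈ F, f x = 1 := fun x hx => (hfeq1 x hx.1).mpr hx.2
  -- span facts
  have hFfu : ∀ x ∈ F, (f - u) x = 0 := by
    intro x hx
    rw [LinearMap.sub_apply, hFu1 x hx, hu1 x hx.1, sub_self]
  have hspanFK : Submodule.span ℝ F ≤ LinearMap.ker (f - u) := by
    rw [Submodule.span_le]
    intro x hx
    exact LinearMap.mem_ker.mpr (hFfu x hx)
  have hfux₀ : (f - u) x₀ = -1 := by
    rw [LinearMap.sub_apply, hfx₀, hu1 x₀ hx₀Ω]; ring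
  have hx₀notin : x₀ ∉ Submodule.span ℝ F := by
    intro hmem
    have := hspanFK hmem
    rw [LinearMap.mem_ker, hfux₀] at this
    norm_num at this
  obtain ⟨f₁, hf₁⟩ := id hFne
  have hspanF_rank : finrank ℝ (Submodule.span ℝ F) = d := by
    have := finrank_span_hyperplane (u := u) hf₁ (fun x hx => hu1 x (hFΩ hx))
    omega
  have hx₀ne : x₀ ≠ 0 := by
    intro h
    have := hu1 x₀ hx₀Ω
    rw [h, map_zero] at this
    norm_num at this
  have htop : Submodule.span ℝ F ⊔ Submodule.span ℝ {x₀} = ⊤ := by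
    apply Submodule.eq_top_of_finrank_eq
    have hinf : Submodule.span ℝ F ⊓ Submodule.span ℝ {x₀} = ⊥ := by
      rw [eq_bot_iff]
      intro x hx
      obtain ⟨hx1, hx2⟩ := Submodule.mem_inf.mp hx
      rw [Submodule.mem_span_singleton] at hx2
      obtain ⟨r, rfl⟩ := hx2
      rcases eq_or_ne r 0 with rfl | hr
      · simp
      · exfalso
        exact hx₀notin (by
          have := Submodule.smul_mem _ r⁻¹ hx1
          rwa [smul_smul, inv_mul_cancel₀ hr, one_smul] at this)
    have h3 := Submodule.finrank_sup_add_finrank_inf_eq (Submodule.span ℝ F)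
      (Submodule.span ℝ ({x₀} : Set A))
    rw [hinf, finrank_bot, hspanF_rank, finrank_span_singleton hx₀ne] at h3
    omega
  have hdecomp : ∀ v : A, u v = 1 → v - (1 - f v) • x₀ ∈ Submodule.span ℝ F := by
    intro v huv
    have hvtop : v ∈ Submodule.span ℝ F ⊔ Submodule.span ℝ ({x₀} : Set A) := by
      rw [htop]; exact Submodule.mem_top
    obtain ⟨h1, hh1, y, hy, hsum⟩ := Submodule.mem_sup.mp hvtop
    rw [Submodule.mem_span_singleton] at hy
    obtain ⟨r, rfl⟩ := hy
    have hr : r = 1 - f v := by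
      have happ : (f - u) v = (f - u) h1 + r * ((f - u) x₀) := by
        rw [← hsum, map_add, map_smul, smul_eq_mul]
      rw [LinearMap.mem_ker.mp (hspanFK hh1), hfux₀, LinearMap.sub_apply, huv] at happ
      have : f v - 1 = -r := by linarith [happ]
      linarith
    rw [← hr]
    have : v - r • x₀ = h1 := by rw [← hsum]; abel
    rw [this]
    exact hh1
  -- purity
  have hpure : IsPureEffect Apos u f := by
    refine ⟨hfE, ?_⟩
    intro g hg h2 hh2 hseg
    obtain ⟨a, b, ha, hb, hab, habf⟩ := hseg
    have happ : ∀ x, a * g x + b * h2 x = f x := by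
      intro x
      rw [← habf]
      simp [LinearMap.add_apply, LinearMap.smul_apply, smul_eq_mul]
    have hones : ∀ ω ∈ F, g ω = 1 ∧ h2 ω = 1 := by
      intro ω hω
      have hωS : ω ∈ States Apos u := hω.1
      have hfω : f ω = 1 := hFu1 ω hω
      have h1 := happ ω
      rw [hfω] at h1
      obtain ⟨hg0, hg1⟩ := hg ω hωS
      obtain ⟨hh0, hh1⟩ := hh2 ω hωS
      constructor
      · by_contra hne
        have : g ω < 1 := lt_of_le_of_ne hg1 hne
        nlinarith
      · by_contra hne
        have : h2 ω < 1 := lt_of_le_of_ne hh1 hne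
        nlinarith
    have hzeros : g x₀ = 0 ∧ h2 x₀ = 0 := by
      have h1 := happ x₀
      rw [hfx₀] at h1
      obtain ⟨hg0, _⟩ := hg x₀ hx₀Ω
      obtain ⟨hh0, _⟩ := hh2 x₀ hx₀Ω
      constructor <;> nlinarith
    have hker : ∀ θ : A →ₗ[ℝ] ℝ, (∀ x ∈ F, θ x = 0) → θ x₀ = 0 → θ = 0 := by
      intro θ hθF hθ0
      have h1 : Submodule.span ℝ F ⊔ Submodule.span ℝ ({x₀} : Set A) ≤ LinearMap.ker θ := by
        apply sup_le <;> rw [Submodule.span_le] <;> intro x hx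
        · exact LinearMap.mem_ker.mpr (hθF x hx)
        · rw [mem_singleton_iff] at hx
          subst hx
          exact LinearMap.mem_ker.mpr hθ0
      rw [htop, top_le_iff, LinearMap.ker_eq_top] at h1
      exact h1
    · have := hker (g - f) (fun x hx => by
        rw [LinearMap.sub_apply, (hones x hx).1, hFu1 x hx, sub_self])
        (by rw [LinearMap.sub_apply, hzeros.1, hfx₀, sub_self])
      exact sub_eq_zero.mp this
  -- minus-face
  have hface : IsFaceOf F Ω := by
    refine ⟨hFne, ?_, hFΩ, ?_⟩
    · intro x hx y hy s t' hs ht' hst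
      refine ⟨hΩconv hx.1 hy.1 hs ht' hst, ?_⟩
      have : φ (s • x + t' • y) = s * φ x + t' * φ y := by
        simp [map_add, map_smul, smul_eq_mul]
      rw [this, hx.2, hy.2, ← add_mul, hst, one_mul]
    · intro x hxΩ y hyΩ l hl0 hl1 hmem
      have hφm : l * φ x + (1 - l) * φ y = c := by
        have : φ (l • x + (1 - l) • y) = l * φ x + (1 - l) * φ y := by
          simp [map_add, map_smul, smul_eq_mul]
        rw [← this]; exact hmem.2
      have hxle := hle x hxΩ
      have hyle := hle y hyΩ
      have hcc : l * c + (1 - l) * c = c := by ring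
      have hxc : φ x = c := by
        by_contra hne
        have hlt : φ x < c := lt_of_le_of_ne hxle hne
        have h1 : l * φ x < l * c := mul_lt_mul_of_pos_left hlt hl0
        have h2 : (1 - l) * φ y ≤ (1 - l) * c :=
          mul_le_mul_of_nonneg_left hyle (by linarith)
        linarith
      have hyc : φ y = c := by
        by_contra hne
        have hlt : φ y < c := lt_of_le_of_ne hyle hne
        have h2 : (1 - l) * φ y < (1 - l) * c := mul_lt_mul_of_pos_left hlt (by linarith)
        have h1 : l * φ x ≤ l * c := mul_le_mul_of_nonneg_left hxle hl0.le
        linarith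
      exact ⟨⟨hxΩ, hxc⟩, ⟨hyΩ, hyc⟩⟩
  have hminus : IsMinusFace (certainFace Apos u f) (States Apos u) := by
    rw [hcf]
    refine ⟨hface, ?_⟩
    rw [setDim_eq F hFne, setDim_eq Ω ⟨ω₀, hω₀⟩]
    have h1 : finrank ℝ (vectorSpan ℝ F) + 1 = d := hFrank
    omega
  refine ⟨f, hpure, hminus, ?_⟩
  -- no transformation
  rintro ⟨L, ⟨hLpos, _⟩, hLu, hLfix⟩
  rw [hcf] at hLfix
  have hLspan : ∀ x ∈ Submodule.span ℝ F, L x = x := by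
    intro x hx
    have hsub : Submodule.span ℝ F ≤ LinearMap.ker (L - LinearMap.id) := by
      rw [Submodule.span_le]
      intro y hy
      rw [SetLike.mem_coe, LinearMap.mem_ker, LinearMap.sub_apply, LinearMap.id_apply,
        hLfix y hy, sub_self]
    have := hsub hx
    rw [LinearMap.mem_ker, LinearMap.sub_apply, LinearMap.id_apply, sub_eq_zero] at this
    exact this
  have hLzero : ∀ x ∈ Apos, u (L x) = 0 → L x = 0 := by
    intro x hx h0
    by_contra hne
    exact absurd h0 (ne_of_gt (hASS.unit_pos _ (hLpos x hx) hne))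
  have hLx₀ : L x₀ = 0 := hLzero x₀ hx₀Ω.1 (by rw [hLu x₀, hfx₀])
  have hLv : ∀ v : A, u v = 1 → L v = v - (1 - f v) • x₀ := by
    intro v huv
    have hdec := hdecomp v huv
    have h1 := hLspan _ hdec
    rw [map_sub, map_smul, hLx₀, smul_zero, sub_zero] at h1
    exact h1
  have hcases : ∀ v ∈ E, f v = 1 ∨ v = x₀ := by
    intro v hvE2
    have hvΩ2 : v ∈ Ω := hEΩ hvE2
    have hLvA : L v ∈ Apos := hLpos v hvΩ2.1
    have hLveq := hLv v (hu1 v hvΩ2)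
    have huLv : u (L v) = f v := hLu v
    rcases eq_or_lt_of_le (hf0 v hvΩ2) with h0 | h0
    · right
      have hL0 : L v = 0 := hLzero v hvΩ2.1 (by rw [huLv, ← h0])
      rw [hL0, ← h0] at hLveq
      have : v = x₀ := by
        have h5 : (0 : A) = v - x₀ := by rw [hLveq]; ring_nf; rw [one_smul]
        have := sub_eq_zero.mp h5.symm
        exact this
      exact this
    rcases eq_or_lt_of_le (hf1 v hvΩ2) with h1 | h1
    · left; exact h1
    · exfalso
      set σ : A := (f v)⁻¹ • L v with hσ
      have hσA : σ ∈ Apos := hASS.smul_mem _ (inv_nonneg.mpr h0.le) _ hLvA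
      have hσu : u σ = 1 := by
        rw [hσ, map_smul, smul_eq_mul, huLv, inv_mul_cancel₀ (ne_of_gt h0)]
      have hσΩ : σ ∈ Ω := ⟨hσA, hσu⟩
      have hcomb : v = f v • σ + (1 - f v) • x₀ := by
        rw [hσ, smul_inv_smul₀ (ne_of_gt h0), hLveq]
        abel
      have hsegm : v ∈ openSegment ℝ σ x₀ :=
        ⟨f v, 1 - f v, h0, by linarith, by ring, hcomb.symm⟩
      obtain ⟨_, hvex⟩ := hvE2
      have hx0v := (hvex hx₀Ω hσΩ (by rw [openSegment_symm]; exact hsegm))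
      rw [← hx0v, hfx₀] at h0
      exact lt_irrefl 0 h0
  have hwx₀ : w = x₀ := by
    rcases hcases w hwE with h | h
    · exfalso
      have : φ w = c := (hfeq1 w hwΩ).mp h
      linarith
    · exact h
  have hBF : ∀ v ∈ B, v ∈ F := by
    intro v hvB2
    rcases hcases v (hBE hvB2) with h | h
    · exact ⟨hBΩ hvB2, (hfeq1 v (hBΩ hvB2)).mp h⟩
    · exfalso
      rw [← hwx₀] at h
      exact hwB (h ▸ hvB2)
  have hwspan : w ∈ affineSpan ℝ B := by
    have h1 : w ∈ affineSpan ℝ Ω := subset_affineSpan ℝ Ω hwΩ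
    rw [hΩE, affineSpan_convexHull] at h1
    rwa [← hBspan] at h1
  have hBK : affineSpan ℝ B ≤ (LinearMap.ker (f - u)).toAffineSubspace := by
    rw [affineSpan_le]
    intro x hx
    have hxF := hBF x hx
    rw [SetLike.mem_coe, Submodule.mem_toAffineSubspace]
    exact LinearMap.mem_ker.mpr (hFfu x hxF)
  have hwker : w ∈ LinearMap.ker (f - u) :=
    Submodule.mem_toAffineSubspace.mp (hBK hwspan)
  rw [LinearMap.mem_ker, LinearMap.sub_apply, hu1 w hwΩ, sub_eq_zero] at hwker
  have : φ w = c := (hfeq1 w hwΩ).mp hwker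
  linarith
end

section
/- Let (A, A₊, u_A) be an abstract state space with dim A > 1, let f ∈ E_A be a pure effect, and let T : A → A be a transformation with u_A ∘ T = f. Then dim(T(F_f)) ≤ dim A − dim F̄_f − 2, where dim ∅ = −1. -/
open Set

variable {A : Type*} [NormedAddCommGroup A] [NormedSpace ℝ A] [FiniteDimensional ℝ A]

private lemma aux_linIndep {V : Type*} [AddCommGroup V] [Module ℝ V] {n : ℕ}
    (u : V →ₗ[ℝ] ℝ) (p : Fin n → V) (hu : ∀ i, u (p i) = 1)
    (hp : AffineIndependent ℝ p) : LinearIndependent ℝ p := by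
  rw [Fintype.linearIndependent_iff]
  intro g hg
  have hsum : ∑ i, g i = 0 := by
    have := congrArg u hg
    simpa [map_sum, map_smul, hu] using this
  intro i
  exact affineIndependent_iff.mp hp Finset.univ g (by simpa using hsum) (by simpa using hg) i
    (Finset.mem_univ i)

private lemma aux_card_le {V : Type*} [NormedAddCommGroup V] [NormedSpace ℝ V]
    [FiniteDimensional ℝ V] {n : ℕ} (u : V →ₗ[ℝ] ℝ) (S : Submodule ℝ V) (p : Fin n → V)
    (hu : ∀ i, u (p i) = 1) (hp : AffineIndependent ℝ p) (hmem : ∀ i, p i ∈ S) :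
    n ≤ Module.finrank ℝ S := by
  have hlin : LinearIndependent ℝ p := aux_linIndep u p hu hp
  have hlin' : LinearIndependent ℝ (fun i => (⟨p i, hmem i⟩ : S)) := by
    apply LinearIndependent.of_comp S.subtype
    exact hlin
  simpa using hlin'.fintype_card_le_finrank

/-- For a pure effect `f` and a transformation `T` with `u ∘ T = f`,
`dim T(F_f) ≤ dim A - dim F̄_f - 2`. -/
theorem dim_image_certainFace_le
    (Apos : Set A) (u : A →ₗ[ℝ] ℝ) (hASS : IsAbstractStateSpace Apos u)
    (hdim : 1 < Module.finrank ℝ A)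
    (f : Module.Dual ℝ A) (hf : IsPureEffect Apos u f)
    (T : A →ₗ[ℝ] A) (hT : IsTransformation Apos u T) (hTf : ∀ x : A, u (T x) = f x) :
    setDim (T '' certainFace Apos u f)
      ≤ (Module.finrank ℝ A : ℤ) - setDim (impossibleFace Apos u f) - 2 := by
  classical
  set n := Module.finrank ℝ A with hn
  set S1 := {m : ℕ | ∃ p : Fin m → A, (∀ i, p i ∈ T '' certainFace Apos u f) ∧
    AffineIndependent ℝ p} with hS1
  set S2 := {m : ℕ | ∃ p : Fin m → A, (∀ i, p i ∈ impossibleFace Apos u f) ∧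
    AffineIndependent ℝ p} with hS2
  have h1 : ∀ m ∈ S1, m ≤ Module.finrank ℝ (LinearMap.range T) := by
    rintro m ⟨p, hpS, hpa⟩
    refine aux_card_le u _ p (fun i => ?_) hpa (fun i => ?_)
    · obtain ⟨ω, hω, hTω⟩ := hpS i
      rw [← hTω, hTf]
      exact hω.2
    · obtain ⟨ω, _, hTω⟩ := hpS i
      exact ⟨ω, hTω⟩
  have h2 : ∀ m ∈ S2, m ≤ Module.finrank ℝ (LinearMap.ker T) := by
    rintro m ⟨p, hpS, hpa⟩
    refine aux_card_le u _ p (fun i => (hpS i).1.2) hpa (fun i => ?_)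
    obtain ⟨⟨hpos, hu1⟩, hf0⟩ := hpS i
    have hTpos : T (p i) ∈ Apos := hT.1 _ hpos
    have huT : u (T (p i)) = 0 := by rw [hTf]; exact hf0
    have : T (p i) = 0 := by
      by_contra h
      exact absurd huT (ne_of_gt (hASS.unit_pos _ hTpos h))
    exact LinearMap.mem_ker.mpr this
  have h0 : ∀ S : Set ℕ, S = S1 ∨ S = S2 → 0 ∈ S := by
    rintro S (rfl | rfl) <;>
      exact ⟨fun i => i.elim0, fun i => i.elim0, affineIndependent_of_subsingleton ℝ _⟩
  have hb1 : BddAbove S1 := ⟨_, h1⟩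
  have hb2 : BddAbove S2 := ⟨_, h2⟩
  have hm1 : sSup S1 ∈ S1 := Nat.sSup_mem ⟨0, h0 _ (Or.inl rfl)⟩ hb1
  have hm2 : sSup S2 ∈ S2 := Nat.sSup_mem ⟨0, h0 _ (Or.inr rfl)⟩ hb2
  have hrn : Module.finrank ℝ (LinearMap.range T) + Module.finrank ℝ (LinearMap.ker T) = n :=
    LinearMap.finrank_range_add_finrank_ker T
  have hkey : sSup S1 + sSup S2 ≤ n := by
    have := h1 _ hm1
    have := h2 _ hm2
    omega
  simp only [setDim, ← hS1, ← hS2, ← hn]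
  omega
end

section
/- Let (A, A₊, u_A) be an abstract state space and let F be a minus-face of Ω_A. Then the set U_F := {g ∈ E_A | g(ω) = 1 for all ω ∈ F} is a one-dimensional face of E_A, namely a line segment whose two endpoints are u_A and the unique pure effect f with F_f = F. -/
open Set
open scoped Pointwise

variable {A : Type*} [NormedAddCommGroup A] [NormedSpace ℝ A] [FiniteDimensional ℝ A]

section Helpers

variable {V : Type*} [AddCommGroup V] [Module ℝ V] [FiniteDimensional ℝ V]

lemma setDim_eq_finrank {S : Set V} (hS : S.Nonempty) :
    setDim S = (Module.finrank ℝ (vectorSpan ℝ S) : ℤ) := by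
  classical
  set d := Module.finrank ℝ (vectorSpan ℝ S) with hd
  set N := {n : ℕ | ∃ p : Fin n → V, (∀ i, p i ∈ S) ∧ AffineIndependent ℝ p} with hN
  obtain ⟨t, hts, hspan, hind⟩ := exists_affineIndependent ℝ V S
  have htfin : t.Finite := finite_set_of_fin_dim_affineIndependent ℝ hind
  haveI := htfin.fintype
  have htne : t.Nonempty := by
    rcases t.eq_empty_or_nonempty with h | h
    · exfalso
      obtain ⟨s₀, hs₀⟩ := hS
      have h1 : s₀ ∈ affineSpan ℝ t := hspan ▸ mem_affineSpan ℝ hs₀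
      rw [h] at h1
      rw [AffineSubspace.span_empty] at h1
      exact AffineSubspace.notMem_bot ℝ V s₀ h1
    · exact h
  haveI : Nonempty ↥t := htne.to_subtype
  have hvs : vectorSpan ℝ (Set.range ((↑) : t → V)) = vectorSpan ℝ S := by
    rw [Subtype.range_coe, ← direction_affineSpan, hspan, direction_affineSpan]
  have hcard : d + 1 = Fintype.card ↥t := by
    rw [← hind.finrank_vectorSpan_add_one, hvs]
  have hmem : d + 1 ∈ N := by
    refine ⟨fun i => ↑((Fintype.equivFin ↥t).symm (finCongr hcard i)), fun i => hts (Subtype.coe_prop _), ?_⟩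
    exact hind.comp_embedding ((finCongr hcard).toEmbedding.trans (Fintype.equivFin ↥t).symm.toEmbedding)
  have hub : ∀ n ∈ N, n ≤ d + 1 := by
    rintro n ⟨p, hpS, hpi⟩
    match n with
    | 0 => exact Nat.zero_le _
    | (m+1) =>
      have h1 : Module.finrank ℝ (vectorSpan ℝ (Set.range p)) = m :=
        hpi.finrank_vectorSpan (by simp)
      have h2 : vectorSpan ℝ (Set.range p) ≤ vectorSpan ℝ S :=
        vectorSpan_mono ℝ (Set.range_subset_iff.2 hpS)
      have h3 := Submodule.finrank_mono h2
      rw [h1] at h3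
      omega
  have hsup : sSup N = d + 1 :=
    le_antisymm (csSup_le ⟨_, hmem⟩ hub) (le_csSup ⟨d+1, hub⟩ hmem)
  show ((sSup N : ℕ) : ℤ) - 1 = (d : ℤ)
  rw [hsup]; push_cast; ring

lemma exists_relint_point {S : Set V} (hconv : Convex ℝ S) (hne : S.Nonempty) :
    ∃ x ∈ S, ∀ y ∈ affineSpan ℝ S, ∃ ε : ℝ, 0 < ε ∧ x + ε • (x - y) ∈ S := by
  classical
  obtain ⟨t, hts, hspan, hind⟩ := exists_affineIndependent ℝ V S
  have htfin : t.Finite := finite_set_of_fin_dim_affineIndependent ℝ hind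
  haveI := htfin.fintype
  have htne : t.Nonempty := by
    rcases t.eq_empty_or_nonempty with h | h
    · exfalso
      obtain ⟨s₀, hs₀⟩ := hne
      have h1 : s₀ ∈ affineSpan ℝ t := hspan ▸ mem_affineSpan ℝ hs₀
      rw [h] at h1
      rw [AffineSubspace.span_empty] at h1
      exact AffineSubspace.notMem_bot ℝ V s₀ h1
    · exact h
  haveI : Nonempty ↥t := htne.to_subtype
  set p : ↥t → V := ((↑) : t → V) with hp
  set n := Fintype.card ↥t with hn
  have hnpos : 0 < n := Fintype.card_pos
  have hn0 : (n : ℝ) ≠ 0 := by positivity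
  have hchS : convexHull ℝ (Set.range p) ⊆ S := by
    rw [hp, Subtype.range_coe]
    exact convexHull_min hts hconv
  have hsum_inv : ∑ _i : ↥t, (n : ℝ)⁻¹ = 1 := by
    rw [Finset.sum_const, Finset.card_univ, ← hn, nsmul_eq_mul, mul_inv_cancel₀ hn0]
  set x := ∑ i : ↥t, (n : ℝ)⁻¹ • p i with hx
  have hxS : x ∈ S := by
    apply hchS
    have := affineCombination_mem_convexHull (s := Finset.univ) (v := p)
      (w := fun _ => (n:ℝ)⁻¹) (fun i _ => by positivity) hsum_inv
    rwa [Finset.affineCombination_eq_linear_combination _ _ _ hsum_inv] at this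
  refine ⟨x, hxS, fun y hy => ?_⟩
  have hy' : y ∈ affineSpan ℝ (Set.range p) := by
    rw [hp, Subtype.range_coe, hspan]; exact hy
  obtain ⟨s', w, hw1, hyeq⟩ := eq_affineCombination_of_mem_affineSpan hy'
  set w' : ↥t → ℝ := (↑s' : Set ↥t).indicator w with hw'
  have hw'1 : ∑ i, w' i = 1 := by
    rw [hw', Finset.sum_indicator_subset _ (Finset.subset_univ s'), hw1]
  have hyeq' : y = ∑ i, w' i • p i := by
    rw [hyeq, Finset.affineCombination_indicator_subset _ _ (Finset.subset_univ s'),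
      Finset.affineCombination_eq_linear_combination _ _ _ hw'1]
  set M := (∑ i, |w' i|) + 1 with hM
  have hMpos : 0 < M := by positivity
  have hMi : ∀ i, w' i ≤ M := by
    intro i
    have h1 : |w' i| ≤ ∑ j, |w' j| :=
      Finset.single_le_sum (fun j _ => abs_nonneg (w' j)) (Finset.mem_univ i)
    have := le_abs_self (w' i)
    simp only [hM]; linarith
  set ε := 1 / (n * M) with hε
  have hεpos : 0 < ε := by positivity
  refine ⟨ε, hεpos, ?_⟩
  set v : ↥t → ℝ := fun i => (1 + ε) * (n : ℝ)⁻¹ - ε * w' i with hv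
  have hv0 : ∀ i ∈ Finset.univ, 0 ≤ v i := by
    intro i _
    have h1 : ε * w' i ≤ ε * M := by
      apply mul_le_mul_of_nonneg_left (hMi i) hεpos.le
    have h2 : ε * M = (n : ℝ)⁻¹ := by
      rw [hε]; field_simp
    have h3 : (0:ℝ) < (n:ℝ)⁻¹ := by positivity
    have h4 : (1 + ε) * (n : ℝ)⁻¹ = (n:ℝ)⁻¹ + ε * (n:ℝ)⁻¹ := by ring
    simp only [hv]
    nlinarith
  have hv1 : ∑ i, v i = 1 := by
    simp only [hv]
    rw [Finset.sum_sub_distrib, ← Finset.mul_sum, ← Finset.mul_sum, hw'1]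
    rw [Finset.sum_const, Finset.card_univ, ← hn, nsmul_eq_mul]
    field_simp
    ring
  have hzmem : ∑ i, v i • p i ∈ S := by
    apply hchS
    have := affineCombination_mem_convexHull (s := Finset.univ) (v := p) (w := v) hv0 hv1
    rwa [Finset.affineCombination_eq_linear_combination _ _ _ hv1] at this
  have heq : x + ε • (x - y) = ∑ i, v i • p i := by
    have hxy : x + ε • (x - y) = (1 + ε) • x - ε • y := by module
    rw [hxy, hx, hyeq', Finset.smul_sum, Finset.smul_sum, ← Finset.sum_sub_distrib]
    apply Finset.sum_congr rfl
    intro i _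
    rw [smul_smul, smul_smul, ← sub_smul]
  rw [heq]
  exact hzmem

end Helpers


set_option maxHeartbeats 4000000 in
/-- For a minus-face `F` of `Ω_A`, the set `U_F` is a one-dimensional face
of `E_A`: a line segment with endpoints `u_A` and the unique pure effect `f` with
`F_f = F`. -/
theorem uF_is_segment
    (Apos : Set A) (u : A →ₗ[ℝ] ℝ) (hASS : IsAbstractStateSpace Apos u)
    (F : Set A) (hF : IsMinusFace F (States Apos u)) :
    IsFaceOf {g ∈ Effects Apos u | ∀ ω ∈ F, g ω = 1} (Effects Apos u) ∧
    setDim {g ∈ Effects Apos u | ∀ ω ∈ F, g ω = 1} = 1 ∧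
    ∃ f : Module.Dual ℝ A, IsPureEffect Apos u f ∧ certainFace Apos u f = F ∧
      (∀ g : Module.Dual ℝ A, IsPureEffect Apos u g → certainFace Apos u g = F → g = f) ∧
      {g ∈ Effects Apos u | ∀ ω ∈ F, g ω = 1} = segment ℝ f u := by
  classical
  obtain ⟨hFace, hdim⟩ := hF
  obtain ⟨hFne, hFconv, hFsub, hface⟩ := hFace
  set Ω := States Apos u with hΩdef
  -- basic facts about Ω
  have hΩconv : Convex ℝ Ω := by
    have h1 : Convex ℝ Apos := by
      intro p hp q hq a b ha hb _
      exact hASS.add_mem _ (hASS.smul_mem a ha p hp) _ (hASS.smul_mem b hb q hq)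
    have h2 : Convex ℝ {w : A | u w = 1} := convex_hyperplane u.isLinear 1
    exact h1.inter h2
  have hΩne : Ω.Nonempty := hFne.mono hFsub
  have hucont : Continuous u := u.continuous_of_finiteDimensional
  have hΩclosed : IsClosed Ω := by
    have h1 : IsClosed {a : A | u a = 1} := isClosed_eq hucont continuous_const
    exact hASS.closed.inter h1
  have hΩcompact : IsCompact Ω := by
    by_cases hA0 : ∀ z ∈ Apos, z = (0 : A)
    · have hempty : Ω = ∅ := by
        ext ω
        simp only [Set.mem_empty_iff_false, iff_false]
        intro hω
        have h0 : ω = 0 := hA0 ω hω.1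
        rw [h0] at hω
        have h2 := hω.2
        rw [map_zero] at h2
        exact one_ne_zero h2.symm
      rw [hempty]; exact isCompact_empty
    · push_neg at hA0
      obtain ⟨z, hz, hz0⟩ := hA0
      set K := Apos ∩ Metric.sphere (0 : A) 1 with hKdef
      have hKcomp : IsCompact K := (isCompact_sphere 0 1).inter_left hASS.closed
      have hKne : K.Nonempty := by
        refine ⟨‖z‖⁻¹ • z, hASS.smul_mem _ (by positivity) z hz, ?_⟩
        rw [mem_sphere_zero_iff_norm, norm_smul]
        simp [norm_ne_zero_iff.2 hz0]
      obtain ⟨z₀, hz₀K, hz₀min⟩ := hKcomp.exists_isMinOn hKne hucont.continuousOn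
      have hz₀ne : z₀ ≠ 0 := by
        intro h0
        have := hz₀K.2
        rw [h0, mem_sphere_zero_iff_norm, norm_zero] at this
        norm_num at this
      have hz₀pos : 0 < u z₀ := hASS.unit_pos z₀ hz₀K.1 hz₀ne
      apply Metric.isCompact_of_isClosed_isBounded hΩclosed
      rw [isBounded_iff_forall_norm_le]
      refine ⟨(u z₀)⁻¹, fun ω hω => ?_⟩
      by_cases hω0 : ω = 0
      · rw [hω0, norm_zero]; positivity
      · have h1 : ‖ω‖⁻¹ • ω ∈ K := by
          refine ⟨hASS.smul_mem _ (by positivity) ω hω.1, ?_⟩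
          rw [mem_sphere_zero_iff_norm, norm_smul]
          simp [norm_ne_zero_iff.2 hω0]
        have h2 := isMinOn_iff.mp hz₀min _ h1
        rw [map_smul, smul_eq_mul, hω.2, mul_one] at h2
        have hnpos : (0:ℝ) < ‖ω‖ := norm_pos_iff.2 hω0
        calc ‖ω‖ = ‖ω‖ * (u z₀) * (u z₀)⁻¹ := by field_simp
        _ ≤ ‖ω‖ * ‖ω‖⁻¹ * (u z₀)⁻¹ := by
            apply mul_le_mul_of_nonneg_right _ (by positivity)
            exact mul_le_mul_of_nonneg_left h2 hnpos.le
        _ = (u z₀)⁻¹ := by field_simp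
  -- relative interior point of F
  obtain ⟨x, hxF, hxP⟩ := exists_relint_point hFconv hFne
  have hxΩ : x ∈ Ω := hFsub hxF
  have hux : u x = 1 := hxΩ.2
  -- the push lemma
  have push : ∀ {y z : A}, y ∈ Ω → z ∈ Ω → ∀ {ε : ℝ}, 0 < ε → z = x + ε • (x - y) → y ∈ F := by
    intro y z hy hz ε hε hzdef
    have h1 : (0:ℝ) < 1 + ε := by linarith
    have hl1 : 0 < 1/(1+ε) := by positivity
    have hl2 : 1/(1+ε) < 1 := by rw [div_lt_one h1]; linarith
    have hcomb : (1/(1+ε)) • z + (1 - 1/(1+ε)) • y = x := by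
      rw [hzdef]
      match_scalars <;> (field_simp; try ring)
    exact (hface z hz y hy (1/(1+ε)) hl1 hl2 (by rw [hcomb]; exact hxF)).2
  -- vectorSpan of Ω is ker u
  have hker_le : LinearMap.ker u ≤ vectorSpan ℝ Ω := by
    intro w hw
    rw [LinearMap.mem_ker] at hw
    obtain ⟨y, hy, z, hz, rfl⟩ := hASS.generating w
    have hyz : u y = u z := by
      have : u (y - z) = 0 := hw
      rw [map_sub] at this; linarith
    by_cases hy0 : y = 0
    · have hz0 : z = 0 := by
        by_contra hz0
        have := hASS.unit_pos z hz hz0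
        rw [← hyz, hy0, map_zero] at this
        linarith
      rw [hy0, hz0, sub_zero]
      exact Submodule.zero_mem _
    · have ht : 0 < u y := hASS.unit_pos y hy hy0
      set t := u y with htdef
      have hω₁ : t⁻¹ • y ∈ Ω := by
        refine ⟨hASS.smul_mem _ (by positivity) y hy, ?_⟩
        rw [map_smul, smul_eq_mul]
        exact inv_mul_cancel₀ ht.ne'
      have hω₂ : t⁻¹ • z ∈ Ω := by
        refine ⟨hASS.smul_mem _ (by positivity) z hz, ?_⟩
        rw [map_smul, smul_eq_mul, ← hyz]
        exact inv_mul_cancel₀ ht.ne'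
      have heq : y - z = t • (t⁻¹ • y - t⁻¹ • z) := by
        rw [smul_sub, smul_smul, smul_smul, mul_inv_cancel₀ ht.ne']
        simp
      rw [heq]
      have := vsub_mem_vectorSpan ℝ hω₁ hω₂
      rw [vsub_eq_sub] at this
      exact Submodule.smul_mem _ t this
  have hvsΩ : vectorSpan ℝ Ω = LinearMap.ker u := by
    apply le_antisymm _ hker_le
    rw [vectorSpan_def]
    apply Submodule.span_le.2
    rintro v ⟨p, hp, q, hq, rfl⟩
    show u (p - q) = 0
    rw [map_sub, hp.2, hq.2, sub_self]
  -- the auxiliary convex body C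
  set L : Set A := Set.range (fun t : ℝ => t • x) with hLdef
  set C : Set A := Ω + L with hCdef
  have hmemC : ∀ ω ∈ Ω, ∀ t : ℝ, ω + t • x ∈ C := by
    intro ω hω t
    exact Set.add_mem_add hω ⟨t, rfl⟩
  have hΩC : Ω ⊆ C := by
    intro ω hω
    have := hmemC ω hω 0
    simpa using this
  have hCconv : Convex ℝ C := by
    apply Convex.add hΩconv
    have : L = (LinearMap.toSpanSingleton ℝ A x) '' Set.univ := by
      rw [Set.image_univ]; rfl
    rw [this]
    exact convex_univ.linear_image _
  have hCΩ : ∀ a ∈ C, u a = 1 → a ∈ Ω := by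
    intro a ha hua
    rw [hCdef, Set.mem_add] at ha
    obtain ⟨ω, hω, v, ⟨t, rfl⟩, rfl⟩ := ha
    rw [map_add, map_smul, smul_eq_mul, hω.2, hux, mul_one] at hua
    have ht : t = 0 := by linarith
    rw [ht]
    simpa using hω
  have hvsC : vectorSpan ℝ C = ⊤ := by
    rw [Submodule.eq_top_iff']
    intro a
    have hxvs : x ∈ vectorSpan ℝ C := by
      have h1 : x + (1:ℝ) • x ∈ C := hmemC x hxΩ 1
      have h2 : x ∈ C := hΩC hxΩ
      have := vsub_mem_vectorSpan ℝ h1 h2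
      rw [vsub_eq_sub, one_smul, add_sub_cancel_left] at this
      exact this
    have hkervs : LinearMap.ker u ≤ vectorSpan ℝ C :=
      le_trans hker_le (vectorSpan_mono ℝ hΩC)
    have hdec : a = (a - u a • x) + u a • x := by abel
    rw [hdec]
    apply Submodule.add_mem
    · apply hkervs
      rw [LinearMap.mem_ker, map_sub, map_smul, smul_eq_mul, hux, mul_one, sub_self]
    · exact Submodule.smul_mem _ _ hxvs
  have haffC : affineSpan ℝ C = ⊤ := by
    apply le_antisymm le_top
    intro a _
    have h1 : a - x ∈ (affineSpan ℝ C).direction := by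
      rw [direction_affineSpan, hvsC]; trivial
    have h2 := AffineSubspace.vadd_mem_of_mem_direction h1 (mem_affineSpan ℝ (hΩC hxΩ))
    rw [vadd_eq_add, sub_add_cancel] at h2
    exact h2
  have hintC : (interior C).Nonempty :=
    (hCconv.interior_nonempty_iff_affineSpan_eq_top).2 haffC
  -- x is not in the interior of C
  have hxint : x ∉ interior C := by
    intro hx_int
    have hΩF : Ω ⊆ F := by
      intro y hyΩ
      have hcont : Continuous fun t : ℝ => x + t • (x - y) := by
        exact continuous_const.add (continuous_id.smul continuous_const)
      have h0mem : (0:ℝ) ∈ (fun t : ℝ => x + t • (x - y)) ⁻¹' interior C := by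
        simp only [Set.mem_preimage, zero_smul, add_zero]
        exact hx_int
      have hopen : IsOpen ((fun t : ℝ => x + t • (x - y)) ⁻¹' interior C) :=
        isOpen_interior.preimage hcont
      obtain ⟨δ, hδpos, hball⟩ := Metric.isOpen_iff.mp hopen 0 h0mem
      have hhalf : δ/2 ∈ Metric.ball (0:ℝ) δ := by
        rw [Metric.mem_ball, Real.dist_eq, sub_zero, abs_of_pos (by linarith)]
        linarith
      have hzC : x + (δ/2) • (x - y) ∈ C := interior_subset (hball hhalf)
      have hzΩ : x + (δ/2) • (x - y) ∈ Ω := by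
        apply hCΩ _ hzC
        rw [map_add, map_smul, map_sub, smul_eq_mul, hux, hyΩ.2]
        ring
      exact push hyΩ hzΩ (by linarith : (0:ℝ) < δ/2) rfl
    have hFeq : F = Ω := subset_antisymm hFsub hΩF
    rw [hFeq] at hdim
    omega
  -- separating functional
  obtain ⟨l, hl⟩ := geometric_hahn_banach_open_point (hCconv.interior) isOpen_interior hxint
  have hlle : ∀ a ∈ C, l a ≤ l x := by
    intro a haC
    by_contra hgt
    push_neg at hgt
    obtain ⟨a₀, ha₀⟩ := hintC
    set δ := l a - l x with hδdef
    have hδpos : 0 < δ := by linarith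
    set B := |l a₀ - l a| + 1 with hBdef
    have hBpos : 0 < B := by positivity
    set t := min (1/2 : ℝ) (δ/(2*B)) with htdef
    have htpos : 0 < t := lt_min (by norm_num) (by positivity)
    have ht1 : t ≤ 1/2 := min_le_left _ _
    have htB : t * B ≤ δ/2 := by
      have h2 : t ≤ δ/(2*B) := min_le_right _ _
      calc t * B ≤ (δ/(2*B)) * B := mul_le_mul_of_nonneg_right h2 hBpos.le
      _ = δ/2 := by field_simp
    have hq : t • a₀ + (1 - t) • a ∈ interior C :=
      hCconv.combo_interior_self_mem_interior ha₀ haC htpos (by linarith) (by ring)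
    have hlt := hl _ hq
    simp only [map_add, map_smul, smul_eq_mul] at hlt
    have habs : -B ≤ l a₀ - l a := by
      have := neg_abs_le (l a₀ - l a)
      rw [hBdef]; linarith
    have hkey := mul_le_mul_of_nonneg_left habs htpos.le
    nlinarith
  have hlx : l x = 0 := by
    have h1 : x + (1:ℝ) • x ∈ C := hmemC x hxΩ 1
    have h2 : x + (-1:ℝ) • x ∈ C := hmemC x hxΩ (-1)
    have h3 := hlle _ h1
    have h4 := hlle _ h2
    simp only [map_add, map_smul, smul_eq_mul] at h3 h4
    linarith
  have hlΩ : ∀ ω ∈ Ω, l ω ≤ 0 := by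
    intro ω hω
    have := hlle ω (hΩC hω)
    rwa [hlx] at this
  have hω₁ : ∃ ω ∈ Ω, l ω < 0 := by
    obtain ⟨a₀, ha₀⟩ := hintC
    have ha₀C : a₀ ∈ C := interior_subset ha₀
    have hlta₀ : l a₀ < 0 := by
      have := hl _ ha₀
      rwa [hlx] at this
    rw [hCdef, Set.mem_add] at ha₀C
    obtain ⟨ω, hω, v, ⟨t, rfl⟩, rfl⟩ := ha₀C
    refine ⟨ω, hω, ?_⟩
    rw [map_add, map_smul, smul_eq_mul, hlx, mul_zero, add_zero] at hlta₀
    exact hlta₀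
  obtain ⟨ω₁, hω₁Ω, hω₁neg⟩ := hω₁
  set l' : Module.Dual ℝ A := (l : A →ₗ[ℝ] ℝ) with hl'def
  have hl'app : ∀ a, l' a = l a := fun a => rfl
  -- F ⊆ G
  have hFG : ∀ y ∈ F, l y = 0 := by
    intro y hy
    obtain ⟨ε, hεpos, hz⟩ := hxP y (mem_affineSpan ℝ hy)
    have hzΩ : x + ε • (x - y) ∈ Ω := hFsub hz
    have h1 : l (x + ε • (x - y)) ≤ 0 := hlΩ _ hzΩ
    have h2 : l y ≤ 0 := hlΩ y (hFsub hy)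
    rw [map_add, map_smul, map_sub, smul_eq_mul, hlx] at h1
    have h3 : ε * (0 - l y) ≤ 0 := by linarith
    nlinarith
  -- dimension bookkeeping
  set dF := Module.finrank ℝ (vectorSpan ℝ F) with hdFdef
  have hsdF : setDim F = (dF : ℤ) := setDim_eq_finrank hFne
  have hsdΩ : setDim Ω = (Module.finrank ℝ (LinearMap.ker u) : ℤ) := by
    rw [setDim_eq_finrank hΩne, hvsΩ]
  have hdimeq : dF + 1 = Module.finrank ℝ (LinearMap.ker u) := by
    rw [hsdF, hsdΩ] at hdim
    omega
  -- vectorSpan F = ker u ⊓ ker l'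
  set Kmod : Submodule ℝ A := LinearMap.ker u ⊓ LinearMap.ker l' with hKmoddef
  have hvsF_le : vectorSpan ℝ F ≤ Kmod := by
    rw [vectorSpan_def]
    apply Submodule.span_le.2
    rintro v ⟨p, hp, q, hq, rfl⟩
    show p - q ∈ Kmod
    rw [Submodule.mem_inf]
    constructor
    · show u (p - q) = 0
      rw [map_sub, (hFsub hp).2, (hFsub hq).2, sub_self]
    · show l' (p - q) = 0
      rw [hl'app, map_sub, hFG p hp, hFG q hq, sub_self]
  have hKlt : Kmod < LinearMap.ker u := by
    apply lt_of_le_of_ne inf_le_left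
    intro heq
    have h1 : ω₁ - x ∈ LinearMap.ker u := by
      rw [LinearMap.mem_ker, map_sub, hω₁Ω.2, hux, sub_self]
    rw [← heq] at h1
    have h2 : l (ω₁ - x) = 0 := h1.2
    rw [map_sub, hlx, sub_zero] at h2
    exact absurd h2 hω₁neg.ne
  have hKfin : Module.finrank ℝ Kmod < Module.finrank ℝ (LinearMap.ker u) :=
    Submodule.finrank_lt_finrank_of_lt hKlt
  have hKeq : vectorSpan ℝ F = Kmod := by
    apply Submodule.eq_of_le_of_finrank_le hvsF_le
    have := Submodule.finrank_mono hvsF_le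
    omega
  -- G = F
  have hGF : ∀ g ∈ Ω, l g = 0 → g ∈ F := by
    intro g hgΩ hlg
    have h1 : g - x ∈ vectorSpan ℝ F := by
      rw [hKeq, Submodule.mem_inf]
      constructor
      · rw [LinearMap.mem_ker, map_sub, hgΩ.2, hux, sub_self]
      · rw [LinearMap.mem_ker, hl'app, map_sub, hlg, hlx, sub_self]
    have h2 : g ∈ affineSpan ℝ F := by
      have := AffineSubspace.vadd_mem_of_mem_direction
        (by rw [direction_affineSpan]; exact h1) (mem_affineSpan ℝ hxF)
      rwa [vadd_eq_add, sub_add_cancel] at this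
    obtain ⟨ε, hεpos, hz⟩ := hxP g h2
    exact push hgΩ (hFsub hz) hεpos rfl
  -- minimum of l on Ω
  obtain ⟨ω₀, hω₀Ω, hω₀min⟩ := hΩcompact.exists_isMinOn hΩne l.continuous.continuousOn
  set m := l ω₀ with hmdef
  have hm : m < 0 := lt_of_le_of_lt (isMinOn_iff.mp hω₀min _ hω₁Ω) hω₁neg
  have hminv : m⁻¹ < 0 := inv_lt_zero.mpr hm
  have hmge : ∀ ω ∈ Ω, m ≤ l ω := fun ω hω => isMinOn_iff.mp hω₀min _ hω
  -- the pure effect f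
  set f : Module.Dual ℝ A := u - m⁻¹ • l' with hfdef
  have hfapp : ∀ a, f a = u a - m⁻¹ * l a := by
    intro a
    rw [hfdef]
    simp [hl'app, smul_eq_mul]
  have hfF : ∀ ω ∈ F, f ω = 1 := by
    intro ω hω
    rw [hfapp, (hFsub hω).2, hFG ω hω, mul_zero, sub_zero]
  have hfω₀ : f ω₀ = 0 := by
    rw [hfapp, hω₀Ω.2, ← hmdef, inv_mul_cancel₀ hm.ne, sub_self]
  have hfE : f ∈ Effects Apos u := by
    intro ω hω
    rw [hfapp, hω.2]
    have h1 : l ω ≤ 0 := hlΩ ω hω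
    have h2 : m ≤ l ω := hmge ω hω
    constructor
    · have h3 : m⁻¹ * l ω ≤ m⁻¹ * m := mul_le_mul_of_nonpos_left h2 hminv.le
      rw [inv_mul_cancel₀ hm.ne] at h3
      linarith
    · have h4 : 0 ≤ m⁻¹ * l ω := by
        have := mul_nonneg (neg_nonneg.2 hminv.le) (neg_nonneg.2 h1)
        rwa [neg_mul_neg] at this
      linarith
  have hf1iff : ∀ ω ∈ Ω, (f ω = 1 ↔ l ω = 0) := by
    intro ω hω
    rw [hfapp, hω.2]
    constructor
    · intro h
      have h1 : m⁻¹ * l ω = 0 := by linarith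
      rcases mul_eq_zero.mp h1 with h2 | h2
      · exact absurd h2 (inv_ne_zero hm.ne)
      · exact h2
    · intro h; rw [h, mul_zero, sub_zero]
  have hcf : certainFace Apos u f = F := by
    ext ω
    constructor
    · rintro ⟨hωΩ, hfω⟩
      exact hGF ω hωΩ ((hf1iff ω hωΩ).1 hfω)
    · intro hω
      exact ⟨hFsub hω, hfF ω hω⟩
  -- u is an effect
  have huE : (u : Module.Dual ℝ A) ∈ Effects Apos u := by
    intro ω hω
    rw [hω.2]
    norm_num
  have huF : ∀ ω ∈ F, u ω = 1 := fun ω hω => (hFsub hω).2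
  -- the span argument
  have hspan_zero : ∀ h : Module.Dual ℝ A, (∀ ω ∈ F, h ω = 0) → h ω₀ = 0 → h = 0 := by
    intro h hhF hh0
    have hker : vectorSpan ℝ F ≤ LinearMap.ker h := by
      rw [vectorSpan_def]
      apply Submodule.span_le.2
      rintro v ⟨p, hp, q, hq, rfl⟩
      show h (p - q) = 0
      rw [map_sub, hhF p hp, hhF q hq, sub_self]
    apply LinearMap.ext
    intro a
    have hdecomp : a = (a - (u a - l a / m) • x - (l a / m) • ω₀)
        + (u a - l a / m) • x + (l a / m) • ω₀ := by abel
    have hkmem : a - (u a - l a / m) • x - (l a / m) • ω₀ ∈ vectorSpan ℝ F := by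
      rw [hKeq, Submodule.mem_inf]
      constructor
      · rw [LinearMap.mem_ker, map_sub, map_sub, map_smul, map_smul, smul_eq_mul, smul_eq_mul,
          hux, hω₀Ω.2]
        ring
      · rw [LinearMap.mem_ker, hl'app, map_sub, map_sub, map_smul, map_smul, smul_eq_mul,
          smul_eq_mul, hlx, ← hmdef]
        rw [mul_zero, sub_zero, div_mul_cancel₀ _ hm.ne, sub_self]
    have hhk : h (a - (u a - l a / m) • x - (l a / m) • ω₀) = 0 := hker hkmem
    calc h a = h ((a - (u a - l a / m) • x - (l a / m) • ω₀)
        + (u a - l a / m) • x + (l a / m) • ω₀) := by rw [← hdecomp]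
    _ = 0 := by
        rw [map_add, map_add, map_smul, map_smul, smul_eq_mul, smul_eq_mul, hhk,
          hhF x hxF, hh0]
        ring
  -- U = segment f u
  set U := {g ∈ Effects Apos u | ∀ ω ∈ F, g ω = 1} with hUdef
  have hEconv : Convex ℝ (Effects Apos u) := by
    intro g hg h hh a b ha hb hab
    intro ω hω
    have h1 := hg ω hω
    have h2 := hh ω hω
    simp only [LinearMap.add_apply, LinearMap.smul_apply, smul_eq_mul]
    constructor
    · have := mul_nonneg ha h1.1
      have := mul_nonneg hb h2.1
      linarith
    · have := mul_le_mul_of_nonneg_left h1.2 ha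
      have := mul_le_mul_of_nonneg_left h2.2 hb
      nlinarith
  have hUseg : U = segment ℝ f u := by
    ext g
    constructor
    · rintro ⟨hgE, hgF⟩
      set a : ℝ := 1 - g ω₀ with hadef
      have hgω₀ := hgE ω₀ hω₀Ω
      have ha0 : 0 ≤ a := by rw [hadef]; linarith [hgω₀.2]
      have ha1 : 0 ≤ 1 - a := by rw [hadef]; linarith [hgω₀.1]
      have hzero : g - (a • f + (1 - a) • u) = 0 := by
        apply hspan_zero
        · intro ω hω
          simp only [LinearMap.sub_apply, LinearMap.add_apply, LinearMap.smul_apply, smul_eq_mul]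
          rw [hgF ω hω, hfF ω hω, huF ω hω]
          ring
        · simp only [LinearMap.sub_apply, LinearMap.add_apply, LinearMap.smul_apply, smul_eq_mul]
          rw [hfω₀, hω₀Ω.2, hadef]
          ring
      refine ⟨a, 1 - a, ha0, ha1, by ring, ?_⟩
      have := sub_eq_zero.mp hzero
      exact this.symm
    · rintro ⟨a, b, ha, hb, hab, rfl⟩
      constructor
      · exact hEconv hfE huE ha hb hab
      · intro ω hω
        simp only [LinearMap.add_apply, LinearMap.smul_apply, smul_eq_mul]
        rw [hfF ω hω, huF ω hω]
        linarith
  have hfu : f ≠ u := by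
    intro heq
    have h1 : f ω₀ = u ω₀ := by rw [heq]
    rw [hfω₀, hω₀Ω.2] at h1
    norm_num at h1
  -- f is pure
  have hfpure : IsPureEffect Apos u f := by
    rw [IsPureEffect, mem_extremePoints]
    refine ⟨hfE, ?_⟩
    intro g hg h hh hseg
    obtain ⟨a, b, ha, hb, hab, heq⟩ := hseg
    have hgU : g ∈ U := by
      refine ⟨hg, fun ω hω => ?_⟩
      have h1 : a * g ω + b * h ω = 1 := by
        have := congrArg (fun φ : Module.Dual ℝ A => φ ω) heq
        simp only [LinearMap.add_apply, LinearMap.smul_apply, smul_eq_mul] at this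
        rw [this, hfF ω hω]
      have h2 := (hg ω (hFsub hω)).2
      have h3 := (hh ω (hFsub hω)).2
      nlinarith
    have hhU : h ∈ U := by
      refine ⟨hh, fun ω hω => ?_⟩
      have h1 : a * g ω + b * h ω = 1 := by
        have := congrArg (fun φ : Module.Dual ℝ A => φ ω) heq
        simp only [LinearMap.add_apply, LinearMap.smul_apply, smul_eq_mul] at this
        rw [this, hfF ω hω]
      have h2 := (hg ω (hFsub hω)).2
      have h3 := (hh ω (hFsub hω)).2
      nlinarith
    rw [hUseg] at hgU hhU
    obtain ⟨c, c', hc, hc', hcc, hgeq⟩ := hgU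
    obtain ⟨d, d', hd, hd', hdd, hheq⟩ := hhU
    have hgω₀ : g ω₀ = c' := by
      rw [← hgeq]
      simp only [LinearMap.add_apply, LinearMap.smul_apply, smul_eq_mul]
      rw [hfω₀, hω₀Ω.2]
      ring
    have hhω₀ : h ω₀ = d' := by
      rw [← hheq]
      simp only [LinearMap.add_apply, LinearMap.smul_apply, smul_eq_mul]
      rw [hfω₀, hω₀Ω.2]
      ring
    have hfω₀' : a * g ω₀ + b * h ω₀ = 0 := by
      have := congrArg (fun φ : Module.Dual ℝ A => φ ω₀) heq
      simp only [LinearMap.add_apply, LinearMap.smul_apply, smul_eq_mul] at this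
      rw [this, hfω₀]
    rw [hgω₀, hhω₀] at hfω₀'
    have hc'0 : c' = 0 := by nlinarith [mul_nonneg ha.le hc', mul_nonneg hb.le hd']
    have hd'0 : d' = 0 := by nlinarith [mul_nonneg ha.le hc', mul_nonneg hb.le hd']
    have hc1 : c = 1 := by linarith
    have hd1 : d = 1 := by linarith
    constructor
    · rw [← hgeq, hc1, hc'0]; simp
    · rw [← hheq, hd1, hd'0]; simp
  -- the three conclusions
  refine ⟨?_, ?_, f, hfpure, hcf, ?_, hUseg⟩
  · -- IsFaceOf
    refine ⟨⟨u, huE, huF⟩, ?_, fun g hg => hg.1, ?_⟩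
    · intro g hg h hh a b ha hb hab
      exact ⟨hEconv hg.1 hh.1 ha hb hab, fun ω hω => by
        simp only [LinearMap.add_apply, LinearMap.smul_apply, smul_eq_mul]
        rw [hg.2 ω hω, hh.2 ω hω]; linarith⟩
    · intro g hg h hh lam hlam0 hlam1 hmem
      obtain ⟨hmemE, hmemF⟩ := hmem
      have hgF : ∀ ω ∈ F, g ω = 1 := by
        intro ω hω
        have h1 := hmemF ω hω
        simp only [LinearMap.add_apply, LinearMap.smul_apply, smul_eq_mul] at h1
        have h2 := (hg ω (hFsub hω)).2
        have h3 := (hh ω (hFsub hω)).2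
        nlinarith
      have hhF' : ∀ ω ∈ F, h ω = 1 := by
        intro ω hω
        have h1 := hmemF ω hω
        simp only [LinearMap.add_apply, LinearMap.smul_apply, smul_eq_mul] at h1
        have h2 := (hg ω (hFsub hω)).2
        have h3 := (hh ω (hFsub hω)).2
        nlinarith
      exact ⟨⟨hg, hgF⟩, ⟨hh, hhF'⟩⟩
  · -- setDim = 1
    rw [hUseg, setDim_eq_finrank ⟨f, left_mem_segment ℝ f u⟩]
    have hne0 : (u : Module.Dual ℝ A) - f ≠ 0 := sub_ne_zero.2 (Ne.symm hfu)
    have hle1 : vectorSpan ℝ (segment ℝ f u) ≤ Submodule.span ℝ {(u : Module.Dual ℝ A) - f} := by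
      rw [vectorSpan_def]
      apply Submodule.span_le.2
      rintro v ⟨p, hp, q, hq, rfl⟩
      obtain ⟨a, b, _, _, hab, rfl⟩ := hp
      obtain ⟨c, d, _, _, hcd, rfl⟩ := hq
      show (a • f + b • u) - (c • f + d • u) ∈ _
      rw [SetLike.mem_coe, Submodule.mem_span_singleton]
      refine ⟨b - d, ?_⟩
      have haa : a = 1 - b := by linarith
      have hcc : c = 1 - d := by linarith
      rw [haa, hcc]
      module
    have hge1 : Submodule.span ℝ {(u : Module.Dual ℝ A) - f} ≤ vectorSpan ℝ (segment ℝ f u) := by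
      rw [Submodule.span_le, Set.singleton_subset_iff]
      have := vsub_mem_vectorSpan ℝ (right_mem_segment ℝ f u) (left_mem_segment ℝ f u)
      rwa [vsub_eq_sub] at this
    have h1 : Module.finrank ℝ (vectorSpan ℝ (segment ℝ f u)) =
        Module.finrank ℝ (Submodule.span ℝ {(u : Module.Dual ℝ A) - f}) :=
      le_antisymm (Submodule.finrank_mono hle1) (Submodule.finrank_mono hge1)
    rw [h1, finrank_span_singleton hne0]
    norm_num
  · -- uniqueness
    intro g hgpure hgcf
    rw [IsPureEffect, mem_extremePoints] at hgpure
    obtain ⟨hgE, hgext⟩ := hgpure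
    have hgF : ∀ ω ∈ F, g ω = 1 := by
      intro ω hω
      have : ω ∈ certainFace Apos u g := by rw [hgcf]; exact hω
      exact this.2
    have hgU : g ∈ U := ⟨hgE, hgF⟩
    rw [hUseg] at hgU
    obtain ⟨c, c', hc, hc', hcc, hgeq⟩ := hgU
    have hgω₀ : g ω₀ = c' := by
      rw [← hgeq]
      simp only [LinearMap.add_apply, LinearMap.smul_apply, smul_eq_mul]
      rw [hfω₀, hω₀Ω.2]
      ring
    have hω₀nF : ω₀ ∉ F := by
      intro h
      have := hfF ω₀ h
      rw [hfω₀] at this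
      norm_num at this
    have hc'ne : c' ≠ 1 := by
      intro h
      have : ω₀ ∈ certainFace Apos u g := ⟨hω₀Ω, by rw [hgω₀, h]⟩
      rw [hgcf] at this
      exact hω₀nF this
    rcases eq_or_lt_of_le hc' with hc'0 | hc'pos
    · have hc1 : c = 1 := by linarith
      rw [← hgeq, hc1, ← hc'0]
      simp
    · have hcpos : 0 < c := by
        rcases eq_or_lt_of_le hc with h | h
        · exfalso; apply hc'ne; linarith
        · exact h
      have hgopen : g ∈ openSegment ℝ f u := ⟨c, c', hcpos, hc'pos, hcc, hgeq⟩
      exact ((hgext f hfE u huE hgopen).1).symm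
end
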